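/- arXiv:1710.06534 — 4 statements merged into one kernel-verified Lean document; each statement's English description precedes it below -/
import Mathlib

section
/- Let φ, ψ ∈ ℂ[x] be monic polynomials with deg φ < deg ψ. Let X = span_ℂ{φ², φψ, ψ²} and √X = span_ℂ{φ, ψ}. Then X is real if and only if √X is real. -/
/-!
A subspace `X ⊆ ℂ[x]` is real iff it is stable under coefficientwise conjugation `σ`: every
`p ∈ X` splits as `(p + σ p) / 2 + i (p - σ p) / 2i` with both summands real and in `X`.
Comparing coefficients in the top degrees of the monic polynomials `φ², φψ, ψ²` (resp. `φ, ψ`),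
whose degrees strictly increase, each of the two spans is `σ`-stable exactly when `σ φ = φ` and
`σ ψ = ψ + a φ` for some `a ∈ ℂ`; for the first span one gets `(σ φ)² = φ²` first, and the sign
is fixed because both square roots are monic.
-/

open Polynomial

/-- A subspace `X ⊆ ℂ[x]` is real if it has a `ℂ`-basis consisting of polynomials all of
whose coefficients are real. -/
def IsRealSubspace (X : Submodule ℂ (Polynomial ℂ)) : Prop :=
  ∃ (ι : Type) (b : Module.Basis ι ℂ X), ∀ i, ∀ k, ((b i : Polynomial ℂ).coeff k).im = 0

namespace Polynomial

variable {R : Type*} [Semiring R] {p q r x : R[X]}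

lemma mem_span_pair_of_mem_span_triple (hr : r.Monic) (hp : p.degree < r.degree)
    (hq : q.degree < r.degree) (hx : x.degree < r.degree)
    (h : x ∈ Submodule.span R {p, q, r}) : x ∈ Submodule.span R {p, q} := by
  obtain ⟨a, b, c, rfl⟩ := Submodule.mem_span_triple.1 h
  have hc : c = 0 := by
    simpa [coeff_natDegree_eq_zero_of_degree_lt hp, coeff_natDegree_eq_zero_of_degree_lt hq,
      hr.coeff_natDegree] using coeff_natDegree_eq_zero_of_degree_lt hx
  subst hc
  simpa using Submodule.mem_span_pair.2 ⟨a, b, rfl⟩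

lemma eq_of_mem_span_pair_of_degree_eq (hp : p.Monic) (hq : q.Monic) (hpq : p.degree < q.degree)
    (hx : x.Monic) (hxp : x.degree = p.degree) (h : x ∈ Submodule.span R {p, q}) : x = p := by
  obtain ⟨a, b, rfl⟩ := Submodule.mem_span_pair.1 h
  have hb : b = 0 := by
    simpa [coeff_natDegree_eq_zero_of_degree_lt hpq, hq.coeff_natDegree] using
      coeff_natDegree_eq_zero_of_degree_lt (hxp.trans_lt hpq)
  simp only [hb, zero_smul, add_zero] at hx hxp ⊢
  have ha : (a • p).coeff p.natDegree = 1 := natDegree_eq_of_degree_eq hxp ▸ hx.coeff_natDegree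
  rw [coeff_smul, hp.coeff_natDegree, smul_eq_mul, mul_one] at ha
  rw [ha, one_smul]

lemma exists_eq_add_smul_of_mem_span_pair (hq : q.Monic) (hpq : p.degree < q.degree)
    (hx : x.Monic) (hxq : x.degree = q.degree) (h : x ∈ Submodule.span R {p, q}) :
    ∃ a : R, x = q + a • p := by
  obtain ⟨a, b, rfl⟩ := Submodule.mem_span_pair.1 h
  have hb : b = 1 := by
    have hlead : (a • p + b • q).coeff q.natDegree = 1 :=
      natDegree_eq_of_degree_eq hxq ▸ hx.coeff_natDegree
    simpa [coeff_natDegree_eq_zero_of_degree_lt hpq, hq.coeff_natDegree] using hlead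
  exact ⟨a, by rw [hb, one_smul, add_comm]⟩

lemma Monic.eq_of_sq_eq_sq {R : Type*} [CommRing R] [IsDomain R] [CharZero R] {p q : R[X]}
    (hp : p.Monic) (hq : q.Monic) (h : p ^ 2 = q ^ 2) : p = q := by
  refine (sq_eq_sq_iff_eq_or_eq_neg.1 h).resolve_right fun hpq => ?_
  have hlead := hp.coeff_natDegree
  rw [hpq, natDegree_neg, coeff_neg, hq.coeff_natDegree] at hlead
  norm_num at hlead

end Polynomial

noncomputable def polyConj : ℂ[X] →ₗ⋆[ℂ] ℂ[X] where
  toFun p := p.map (starRingEnd ℂ)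
  map_add' _ _ := Polynomial.map_add _
  map_smul' c p := by ext; simp

lemma polyConj_apply (p : ℂ[X]) : polyConj p = p.map (starRingEnd ℂ) := rfl

lemma polyConj_eq_self_iff (p : ℂ[X]) : polyConj p = p ↔ ∀ k, (p.coeff k).im = 0 := by
  simp [Polynomial.ext_iff, polyConj_apply, Complex.conj_eq_iff_im]

lemma polyConj_polyConj (p : ℂ[X]) : polyConj (polyConj p) = p := by
  ext; simp [polyConj_apply]

lemma polyConj_mul (p q : ℂ[X]) : polyConj (p * q) = polyConj p * polyConj q :=
  Polynomial.map_mul _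

lemma polyConj_pow (p : ℂ[X]) (n : ℕ) : polyConj (p ^ n) = polyConj p ^ n :=
  Polynomial.map_pow _ _

lemma Polynomial.Monic.polyConj {p : ℂ[X]} (hp : p.Monic) : (polyConj p).Monic := hp.map _

lemma degree_polyConj (p : ℂ[X]) : (polyConj p).degree = p.degree := degree_map _ _

lemma isRealSubspace_iff_map_polyConj_le (X : Submodule ℂ ℂ[X]) :
    IsRealSubspace X ↔ X.map polyConj ≤ X := by
  constructor
  · rintro ⟨ι, b, hb⟩
    have hfix : (X.comap polyConj).comap X.subtype = ⊤ := by
      rw [eq_top_iff, ← b.span_eq, Submodule.span_le]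
      rintro _ ⟨i, rfl⟩
      simp [(polyConj_eq_self_iff _).2 (hb i)]
    rw [Submodule.map_le_iff_le_comap]
    intro x hx
    simpa using hfix.ge (Submodule.mem_top (x := ⟨x, hx⟩))
  · intro hX
    set s : Set ℂ[X] := {p | p ∈ X ∧ polyConj p = p}
    have hs : Submodule.span ℂ s = X := by
      refine le_antisymm (Submodule.span_le.2 fun p hp => hp.1) fun x hx => ?_
      have hcx : polyConj x ∈ X := hX (Submodule.mem_map_of_mem hx)
      have hre : (1 / 2 : ℂ) • (x + polyConj x) ∈ s :=
        ⟨X.smul_mem _ (X.add_mem hx hcx), by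
          rw [map_smulₛₗ, map_add, polyConj_polyConj, add_comm]; simp [map_ofNat]⟩
      have him : (-Complex.I / 2) • (x - polyConj x) ∈ s :=
        ⟨X.smul_mem _ (X.sub_mem hx hcx), by
          rw [map_smulₛₗ, map_sub, polyConj_polyConj]; simp [map_ofNat]; module⟩
      have hsplit : x = (1 / 2 : ℂ) • (x + polyConj x) +
          Complex.I • ((-Complex.I / 2) • (x - polyConj x)) := by
        rw [smul_smul, show Complex.I * (-Complex.I / 2) = 1 / 2 by
          ring_nf; rw [Complex.I_sq]; ring]
        module
      rw [hsplit]
      exact Submodule.add_mem _ (Submodule.subset_span hre)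
        (Submodule.smul_mem _ _ (Submodule.subset_span him))
    obtain ⟨b, hbs, hspan, hli⟩ := exists_linearIndependent ℂ s
    refine ⟨b, (Module.Basis.span hli).map (LinearEquiv.ofEq _ _ ?_), fun i k => ?_⟩
    · rw [Subtype.range_coe, hspan, hs]
    · simpa using (polyConj_eq_self_iff _).1 (hbs i.2).2 k

lemma map_polyConj_span_pair_le_iff {φ ψ : ℂ[X]} (hφ : φ.Monic) (hψ : ψ.Monic)
    (hdeg : φ.degree < ψ.degree) :
    (Submodule.span ℂ {φ, ψ}).map polyConj ≤ Submodule.span ℂ {φ, ψ} ↔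
      polyConj φ = φ ∧ ∃ a : ℂ, polyConj ψ = ψ + a • φ := by
  simp only [Submodule.map_span_le, Set.mem_insert_iff, Set.mem_singleton_iff, forall_eq_or_imp,
    forall_eq]
  constructor
  · rintro ⟨hφ', hψ'⟩
    exact ⟨eq_of_mem_span_pair_of_degree_eq hφ hψ hdeg hφ.polyConj (degree_polyConj φ) hφ',
      exists_eq_add_smul_of_mem_span_pair hψ hdeg hψ.polyConj (degree_polyConj ψ) hψ'⟩
  · rintro ⟨hφ', a, hψ'⟩
    rw [hφ', hψ', Submodule.mem_span_pair, Submodule.mem_span_pair]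
    exact ⟨⟨1, 0, by simp⟩, ⟨a, 1, by simp [add_comm]⟩⟩

lemma map_polyConj_span_sq_le_iff {φ ψ : ℂ[X]} (hφ : φ.Monic) (hψ : ψ.Monic)
    (hdeg : φ.degree < ψ.degree) :
    (Submodule.span ℂ {φ ^ 2, φ * ψ, ψ ^ 2}).map polyConj ≤
        Submodule.span ℂ {φ ^ 2, φ * ψ, ψ ^ 2} ↔
      polyConj φ = φ ∧ ∃ a : ℂ, polyConj ψ = ψ + a • φ := by
  simp only [Submodule.map_span_le, Set.mem_insert_iff, Set.mem_singleton_iff, forall_eq_or_imp,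
    forall_eq, polyConj_pow, polyConj_mul]
  have hn : φ.natDegree < ψ.natDegree := natDegree_lt_natDegree hφ.ne_zero hdeg
  have h₁ : (φ ^ 2).degree < (φ * ψ).degree :=
    degree_lt_degree (by rw [hφ.natDegree_pow, hφ.natDegree_mul hψ]; omega)
  have h₂ : (φ * ψ).degree < (ψ ^ 2).degree :=
    degree_lt_degree (by rw [hψ.natDegree_pow, hφ.natDegree_mul hψ]; omega)
  constructor
  · rintro ⟨hφ', hψ', -⟩
    have hsq : polyConj φ ^ 2 = φ ^ 2 := by
      have hlt : (polyConj φ ^ 2).degree < (ψ ^ 2).degree := by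
        rw [degree_pow, degree_polyConj, ← degree_pow]
        exact h₁.trans h₂
      refine eq_of_mem_span_pair_of_degree_eq (hφ.pow 2) (hφ.mul hψ) h₁ (hφ.polyConj.pow 2)
        (by rw [degree_pow, degree_polyConj, degree_pow]) ?_
      exact mem_span_pair_of_mem_span_triple (hψ.pow 2) (h₁.trans h₂) h₂ hlt hφ'
    have hφ'' : polyConj φ = φ := hφ.polyConj.eq_of_sq_eq_sq hφ hsq
    rw [hφ''] at hψ'
    have hdeg' : (φ * polyConj ψ).degree = (φ * ψ).degree := by
      rw [degree_mul, degree_mul, degree_polyConj]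
    obtain ⟨a, ha⟩ := exists_eq_add_smul_of_mem_span_pair (hφ.mul hψ) h₁ (hφ.mul hψ.polyConj) hdeg'
      (mem_span_pair_of_mem_span_triple (hψ.pow 2) (h₁.trans h₂) h₂ (hdeg' ▸ h₂) hψ')
    refine ⟨hφ'', a, mul_left_cancel₀ hφ.ne_zero ?_⟩
    rw [ha, smul_eq_C_mul, smul_eq_C_mul]
    ring
  · rintro ⟨hφ', a, hψ'⟩
    simp only [hφ', hψ', Submodule.mem_span_triple]
    refine ⟨⟨1, 0, 0, by simp⟩, ⟨a, 1, 0, ?_⟩, ⟨a ^ 2, 2 * a, 1, ?_⟩⟩ <;>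
      simp only [smul_eq_C_mul, map_mul, map_pow, map_ofNat, map_one, map_zero] <;> ring

/-- Let `φ, ψ ∈ ℂ[x]` be monic with `deg φ < deg ψ`.  Let `X = span{φ², φψ, ψ²}` and
`√X = span{φ, ψ}`.  Then `X` is real iff `√X` is real. -/
theorem stmt4 (φ ψ : Polynomial ℂ) (hφ : φ.Monic) (hψ : ψ.Monic)
    (hdeg : φ.degree < ψ.degree) :
    IsRealSubspace (Submodule.span ℂ {φ ^ 2, φ * ψ, ψ ^ 2}) ↔
      IsRealSubspace (Submodule.span ℂ {φ, ψ}) := by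
  rw [isRealSubspace_iff_map_polyConj_le, isRealSubspace_iff_map_polyConj_le,
    map_polyConj_span_sq_le_iff hφ hψ hdeg, map_polyConj_span_pair_le_iff hφ hψ hdeg]
end

section
/- Let φ, ψ ∈ ℂ[x] be linearly independent over ℂ and let X = span_ℂ{φ², φψ, ψ²}. Then dim_ℂ X = 3 and X^∨ = Wr(φ,ψ)·X; in particular X is self-dual. -/
open Module

/-- The Wronskian `Wr(f_1, …, f_m) = det((d/dx)^(i-1) f_j)` of `m` polynomials. -/
noncomputable def wronskian (m : ℕ) (f : Fin m → Polynomial ℂ) : Polynomial ℂ :=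
  (Matrix.of fun i j : Fin m =>
    (fun p : Polynomial ℂ => Polynomial.derivative p)^[(i : ℕ)] (f j)).det

/-- The dual set `X^∨` of an `N`-dimensional subspace `X ⊆ ℂ[x]`: the set of Wronskians
of `N - 1` elements of `X`. -/
def dualSet (N : ℕ) (X : Submodule ℂ (Polynomial ℂ)) : Set (Polynomial ℂ) :=
  {g | ∃ φ : Fin (N - 1) → Polynomial ℂ, (∀ i, φ i ∈ X) ∧ g = wronskian (N - 1) φ}

/-- `X` is self-dual if `X^∨ = ψ · X` for some polynomial `ψ`. -/
def IsSelfDual (N : ℕ) (X : Submodule ℂ (Polynomial ℂ)) : Prop :=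
  ∃ ψ : Polynomial ℂ, dualSet N X = (fun f => ψ * f) '' (X : Set (Polynomial ℂ))

/-!
Elements of `X` are binary quadratic forms `Q(φ, ψ)`. By the Leibniz rule,
`Wr(Q₁(φ, ψ), Q₂(φ, ψ)) = Wr(φ, ψ) · (Q₁ ∧ Q₂)(φ, ψ)`, where `Q₁ ∧ Q₂` is a cross product of
coefficient vectors (the isomorphism `Λ² Sym² ≅ Sym² ⊗ det` of `GL₂`-modules); since every
coefficient vector is such a cross product, `X^∨ = Wr(φ, ψ) · X`. Over an algebraically closed
field every binary quadratic form is a product of linear forms, so `Q(φ, ψ) = 0` in a domain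
forces a linear relation between `φ` and `ψ`; hence `φ², φψ, ψ²` are independent.
-/

open scoped Polynomial

theorem IsAlgClosed.exists_linear_factors_binaryQuadratic {K : Type*} [Field K] [IsAlgClosed K]
    (a b c : K) :
    ∃ α β γ δ : K, a = α * γ ∧ b = α * δ + β * γ ∧ c = β * δ := by
  rcases eq_or_ne a 0 with rfl | ha
  · exact ⟨0, 1, b, c, by ring, by ring, by ring⟩
  -- with `t` a root of `a t² + b t + c`, the form is `(x - t y) (a x + (a t + b) y)`
  obtain ⟨t, ht⟩ := IsAlgClosed.exists_root (.C a * .X ^ 2 + .C b * .X + .C c : K[X])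
    (by rw [Polynomial.degree_quadratic ha]; decide)
  simp only [Polynomial.IsRoot, Polynomial.eval_add, Polynomial.eval_mul, Polynomial.eval_C,
    Polynomial.eval_pow, Polynomial.eval_X] at ht
  exact ⟨1, -t, a, a * t + b, by ring, by ring, by linear_combination ht⟩

theorem linearIndependent_sq_mul_sq {K A : Type*} [Field K] [IsAlgClosed K] [CommRing A]
    [IsDomain A] [Algebra K A] {φ ψ : A} (h : LinearIndependent K ![φ, ψ]) :
    LinearIndependent K ![φ ^ 2, φ * ψ, ψ ^ 2] := by
  rw [Fintype.linearIndependent_iff]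
  intro g hg
  obtain ⟨α, β, γ, δ, ha, hb, hc⟩ :=
    IsAlgClosed.exists_linear_factors_binaryQuadratic (g 0) (g 1) (g 2)
  have hfactor : (α • φ + β • ψ) * (γ • φ + δ • ψ) = 0 := by
    rw [← hg]
    simp only [Fin.sum_univ_three, Matrix.cons_val, ha, hb, hc, Algebra.smul_def, map_mul,
      map_add]
    ring
  have hg_zero : g 0 = 0 ∧ g 1 = 0 ∧ g 2 = 0 := by
    rcases mul_eq_zero.mp hfactor with h0 | h0 <;>
      obtain ⟨rfl, rfl⟩ := LinearIndependent.pair_iff.mp h _ _ h0 <;> simp [ha, hb, hc]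
  intro i
  fin_cases i <;> simp [hg_zero]

theorem finrank_span_sq_mul_sq {K A : Type*} [Field K] [IsAlgClosed K] [CommRing A]
    [IsDomain A] [Algebra K A] {φ ψ : A} (h : LinearIndependent K ![φ, ψ]) :
    finrank K (Submodule.span K {φ ^ 2, φ * ψ, ψ ^ 2}) = 3 := by
  have hrange : Set.range ![φ ^ 2, φ * ψ, ψ ^ 2] = {φ ^ 2, φ * ψ, ψ ^ 2} := by
    simp only [Matrix.range_cons, Matrix.range_empty, Set.union_empty, Set.singleton_union]
  rw [← hrange, finrank_span_eq_card (linearIndependent_sq_mul_sq h), Fintype.card_fin]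

theorem Polynomial.wronskian_binaryQuadratic {R : Type*} [CommRing R] (φ ψ : R[X])
    (a b c d e f : R) :
    Polynomial.wronskian (a • φ ^ 2 + b • (φ * ψ) + c • ψ ^ 2)
        (d • φ ^ 2 + e • (φ * ψ) + f • ψ ^ 2) =
      Polynomial.wronskian φ ψ *
        ((a * e - b * d) • φ ^ 2 + (2 * (a * f - c * d)) • (φ * ψ) + (b * f - c * e) • ψ ^ 2) := by
  simp only [Polynomial.wronskian, smul_eq_C_mul, derivative_add, derivative_mul, derivative_C,
    derivative_sq, map_sub, map_mul, C_ofNat]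
  ring

theorem exists_binaryQuadratic_wedge_eq {K : Type*} [Field K] (h2 : (2 : K) ≠ 0) (p q r : K) :
    ∃ a b c d e f : K, a * e - b * d = p ∧ 2 * (a * f - c * d) = q ∧ b * f - c * e = r := by
  rcases eq_or_ne p 0 with rfl | hp
  · exact ⟨0, 0, 1, -(q / 2), -r, 0, by ring, by field_simp; ring, by ring⟩
  · exact ⟨1, 0, -(r / p), 0, p, q / 2, by ring, by field_simp; ring, by field_simp; ring⟩

theorem Polynomial.image2_wronskian_span_sq_mul_sq {K : Type*} [Field K] (h2 : (2 : K) ≠ 0)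
    (φ ψ : K[X]) :
    Set.image2 Polynomial.wronskian (Submodule.span K {φ ^ 2, φ * ψ, ψ ^ 2} : Set K[X])
      (Submodule.span K {φ ^ 2, φ * ψ, ψ ^ 2}) =
      (Polynomial.wronskian φ ψ * ·) '' (Submodule.span K {φ ^ 2, φ * ψ, ψ ^ 2} : Set K[X]) := by
  ext g
  simp only [Set.mem_image2, Set.mem_image, SetLike.mem_coe, Submodule.mem_span_triple]
  constructor
  · rintro ⟨_, ⟨a, b, c, rfl⟩, _, ⟨d, e, f, rfl⟩, rfl⟩
    exact ⟨_, ⟨_, _, _, rfl⟩, (wronskian_binaryQuadratic φ ψ a b c d e f).symm⟩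
  · rintro ⟨_, ⟨p, q, r, rfl⟩, rfl⟩
    obtain ⟨a, b, c, d, e, f, rfl, rfl, rfl⟩ := exists_binaryQuadratic_wedge_eq h2 p q r
    exact ⟨_, ⟨a, b, c, rfl⟩, _, ⟨d, e, f, rfl⟩, wronskian_binaryQuadratic φ ψ a b c d e f⟩

theorem wronskian_two_eq (f : Fin 2 → ℂ[X]) :
    wronskian 2 f = Polynomial.wronskian (f 0) (f 1) := by
  simp only [wronskian, Polynomial.wronskian, Matrix.det_fin_two, Matrix.of_apply,
    Fin.coe_ofNat_eq_mod, Nat.zero_mod, Nat.mod_succ, Function.iterate_zero,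
    Function.iterate_one, id_eq]
  ring

theorem dualSet_three_eq_image2 (X : Submodule ℂ ℂ[X]) :
    dualSet 3 X = Set.image2 Polynomial.wronskian X X := by
  ext g
  constructor
  · rintro ⟨f, hf, rfl⟩
    exact ⟨f 0, hf 0, f 1, hf 1, (wronskian_two_eq f).symm⟩
  · rintro ⟨f, hf, f', hf', rfl⟩
    exact ⟨![f, f'], Fin.forall_fin_two.mpr ⟨hf, hf'⟩, (wronskian_two_eq ![f, f']).symm⟩

/-- If `φ, ψ ∈ ℂ[x]` are linearly independent and `X = span{φ², φψ, ψ²}`, then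
`dim X = 3` and `X^∨ = Wr(φ,ψ) · X`; in particular `X` is self-dual. -/
theorem stmt11 (φ ψ : Polynomial ℂ) (h : LinearIndependent ℂ ![φ, ψ]) :
    finrank ℂ (Submodule.span ℂ {φ ^ 2, φ * ψ, ψ ^ 2}) = 3 ∧
    dualSet 3 (Submodule.span ℂ {φ ^ 2, φ * ψ, ψ ^ 2}) =
      (fun f => wronskian 2 ![φ, ψ] * f) ''
        ((Submodule.span ℂ {φ ^ 2, φ * ψ, ψ ^ 2} : Submodule ℂ (Polynomial ℂ)) :
          Set (Polynomial ℂ)) ∧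
    IsSelfDual 3 (Submodule.span ℂ {φ ^ 2, φ * ψ, ψ ^ 2}) := by
  have hdual : dualSet 3 (Submodule.span ℂ {φ ^ 2, φ * ψ, ψ ^ 2}) =
      (wronskian 2 ![φ, ψ] * ·) '' (Submodule.span ℂ {φ ^ 2, φ * ψ, ψ ^ 2} : Set ℂ[X]) := by
    rw [dualSet_three_eq_image2, Polynomial.image2_wronskian_span_sq_mul_sq two_ne_zero,
      wronskian_two_eq]
    rfl
  exact ⟨finrank_span_sq_mul_sq h, hdual, _, hdual⟩
end

section
/- Let N ≤ d, let z_1, …, z_n be distinct points of ℂ ∪ {∞}, and let ξ^{(1)}, …, ξ^{(n)} be partitions with at most N parts, each with ξ^{(s)}_1 ≤ d−N, such that ∑_{s=1}^n |ξ^{(s)}| = N(d−N). If there exists a self-dual space X in the intersection ⋂_{s=1}^n Ω_{ξ^{(s)}}(F(z_s)) ⊆ Gr(N,d), then for every s = 1, …, n and every i = 1, …, N−1 one has ξ^{(s)}_i − ξ^{(s)}_{i+1} = ξ^{(s)}_{N−i} − ξ^{(s)}_{N−i+1}. -/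
/-!
Fix a point `z` of `ℙ¹` and measure polynomials by their order of vanishing at `z` (by their
degree if `z = ∞`). The cell condition at `z` gives a basis `f₀, …, f_{N-1}` of `X` whose orders
are the distinct numbers `e_j = j + ξ_{N-j}` (at `∞`, the degrees are `d - 1 - e_j`). The Wronskians `g_j` of the `f_i`, `i ≠ j`, span a space
containing `X^∨`, and expanding multilinearly in monomials, `g_j` has order
`∑_{i ≠ j} e_i - (0 + 1 + ⋯ + (N - 2))`: the extreme coefficient is the product of the extreme
coefficients of the `f_i` times a nonzero Vandermonde determinant. A nonzero element of a span of
polynomials of distinct orders has one of their orders, so the orders occurring in `X^∨` are the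
`c - e_j`, and those occurring in `ψ · X` are the `ord ψ + e_j`. Self-duality makes the two sets
equal, hence `e_j + e_{N-1-j} = c - ord ψ`, which is the claimed symmetry of `ξ`.
-/

open Module Polynomial

/-- `X` lies in the Schubert cell `Ω_ξ(F)` for the complete flag `F` (indexed so that
`F k` has dimension `k`), where `ξ = (ξ 1 ≥ ⋯ ≥ ξ N)` is a partition (1-indexed). -/
def InSchubertCell (N d : ℕ) (ξ : ℕ → ℕ) (F : ℕ → Submodule ℂ (Polynomial ℂ))
    (X : Submodule ℂ (Polynomial ℂ)) : Prop :=
  ∀ j < N, finrank ℂ ↥(X ⊓ F (d - j - ξ (N - j))) = N - j ∧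
    finrank ℂ ↥(X ⊓ F (d - j - ξ (N - j) - 1)) = N - j - 1

/-- The osculating flag at `z ∈ ℂ`: `F(z)_k = {f ∈ ℂ_d[x] : (x - z)^(d - k) ∣ f}`. -/
noncomputable def oscFlag (d : ℕ) (z : ℂ) (k : ℕ) : Submodule ℂ (Polynomial ℂ) :=
  Polynomial.degreeLT ℂ d ⊓
    (Ideal.span {(Polynomial.X - Polynomial.C z) ^ (d - k)}).restrictScalars ℂ

/-- The osculating flag at a point of `ℙ¹ = ℂ ∪ {∞}`: at `∞` it is `F(∞)_k = ℂ_k[x]`,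
and at `z ∈ ℂ` it is `F(z)`. -/
noncomputable def oscFlagP (d : ℕ) (z : OnePoint ℂ) (k : ℕ) : Submodule ℂ (Polynomial ℂ) :=
  Option.casesOn (z : Option ℂ) (Polynomial.degreeLT ℂ k) (fun w => oscFlag d w k)

open Function Submodule

noncomputable def wronskianAlt (m : ℕ) : ℂ[X] [⋀^Fin m]→ₗ[ℂ] ℂ[X] where
  toMultilinearMap := (Matrix.detRowAlternating.toMultilinearMap.restrictScalars ℂ).compLinearMap
    fun _ => LinearMap.pi fun i : Fin m => (derivative : ℂ[X] →ₗ[ℂ] ℂ[X]) ^ (i : ℕ)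
  map_eq_zero_of_eq' _ _ _ h := Matrix.detRowAlternating.map_eq_zero_of_eq _ (by simp [h])

theorem wronskianAlt_apply (m : ℕ) (f : Fin m → ℂ[X]) :
    wronskianAlt m f = _root_.wronskian m f := by
  rw [_root_.wronskian, ← Matrix.det_transpose]
  change Matrix.det (Matrix.of fun j i : Fin m =>
    ((derivative : ℂ[X] →ₗ[ℂ] ℂ[X]) ^ (i : ℕ)) (f j)) = _
  congr 1
  ext i j
  simp [Module.End.pow_apply]

theorem Fin.exists_succAbove_comp_perm {m : ℕ} {r : Fin m → Fin (m + 1)} (hr : Injective r) :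
    ∃ (j : Fin (m + 1)) (σ : Equiv.Perm (Fin m)), r = j.succAbove ∘ σ := by
  obtain ⟨j, hj⟩ : ∃ j, j ∉ Set.range r := by
    by_contra! h
    simpa using Fintype.card_le_of_surjective r h
  choose σ hσ using fun i => Fin.exists_succAbove_eq fun h : r i = j => hj ⟨i, h⟩
  have hσinj : Injective σ := fun a b hab => hr (by rw [← hσ a, ← hσ b, hab])
  exact ⟨j, Equiv.ofBijective σ (Finite.injective_iff_bijective.mp hσinj),
    funext fun i => (hσ i).symm⟩

theorem wronskian_mem_span_wronskian_succAbove {m : ℕ} (f : Fin (m + 1) → ℂ[X])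
    {φ : Fin m → ℂ[X]} (hφ : ∀ i, φ i ∈ span ℂ (Set.range f)) :
    _root_.wronskian m φ ∈
      span ℂ (Set.range fun j : Fin (m + 1) => _root_.wronskian m (f ∘ j.succAbove)) := by
  classical
  choose c hc using fun i => (mem_span_range_iff_exists_fun ℂ).mp (hφ i)
  have hφ' : φ = fun i => ∑ j, c i j • f j := funext fun i => (hc i).symm
  rw [← wronskianAlt_apply, hφ']
  have hexp := (wronskianAlt m).toMultilinearMap.map_sum fun i (j : Fin (m + 1)) => c i j • f j
  simp only [AlternatingMap.coe_multilinearMap] at hexp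
  rw [hexp]
  refine sum_mem fun r _ => ?_
  rw [AlternatingMap.map_smul_univ]
  refine smul_mem _ _ ?_
  change wronskianAlt m (f ∘ r) ∈ _
  by_cases hr : Injective r
  · obtain ⟨j, σ, rfl⟩ := Fin.exists_succAbove_comp_perm hr
    change wronskianAlt m ((f ∘ j.succAbove) ∘ σ) ∈ _
    rw [AlternatingMap.map_perm, wronskianAlt_apply]
    exact smul_of_tower_mem _ _ (subset_span ⟨j, rfl⟩)
  · rw [(wronskianAlt m).map_eq_zero_of_not_injective (f ∘ r) fun h => hr h.of_comp]
    exact zero_mem _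

theorem det_descFactorial_eq_det_vandermonde (m : ℕ) (k : Fin m → ℕ) :
    (Matrix.of fun i j : Fin m => ((k j).descFactorial i : ℂ)).det =
      (Matrix.vandermonde fun j => (k j : ℂ)).det := by
  rw [Matrix.det_eval_matrixOfPolynomials_eq_det_vandermonde _ (fun i => descPochhammer ℂ i)
    (fun i => descPochhammer_natDegree ℂ i) (fun i => monic_descPochhammer ℂ i),
    ← Matrix.det_transpose]
  congr 1
  ext i j
  simp [descPochhammer_eval_eq_descFactorial]

theorem X_pow_mul_wronskian_X_pow (m : ℕ) (k : Fin m → ℕ) :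
    X ^ (∑ i : Fin m, (i : ℕ)) * _root_.wronskian m (fun j => X ^ (k j)) =
      C (Matrix.vandermonde fun j => (k j : ℂ)).det * X ^ (∑ j, k j) := by
  have hentry : ∀ i j : Fin m, X ^ (i : ℕ) * derivative^[i] (X ^ (k j) : ℂ[X]) =
      X ^ k j * C ((k j).descFactorial i : ℂ) := by
    intro i j
    rw [iterate_derivative_X_pow_eq_natCast_mul]
    rcases le_or_gt (i : ℕ) (k j) with hik | hik
    · rw [← C_eq_natCast, mul_left_comm, ← pow_add, Nat.add_sub_cancel' hik, mul_comm]
    · simp [Nat.descFactorial_eq_zero_iff_lt.mpr hik]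
  rw [_root_.wronskian, ← Finset.prod_pow_eq_pow_sum, ← Finset.prod_pow_eq_pow_sum,
    ← Matrix.det_mul_column]
  simp only [Matrix.of_apply, hentry]
  rw [← det_descFactorial_eq_det_vandermonde, RingHom.map_det, mul_comm,
    ← Matrix.det_mul_row]
  rfl

theorem coeff_X_pow_mul_wronskian (m : ℕ) (φ : Fin m → ℂ[X]) (M : ℕ) :
    (X ^ (∑ i : Fin m, (i : ℕ)) * _root_.wronskian m φ).coeff M =
      ∑ n ∈ Fintype.piFinset (fun i => (φ i).support) with ∑ i, n i = M,
        (∏ i, (φ i).coeff (n i)) * (Matrix.vandermonde fun i => (n i : ℂ)).det := by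
  classical
  have hexpand : _root_.wronskian m φ = ∑ n ∈ Fintype.piFinset (fun i => (φ i).support),
      (∏ i, (φ i).coeff (n i)) • _root_.wronskian m (fun i => X ^ n i) := by
    have hφ : φ = fun i => ∑ k ∈ (φ i).support, (φ i).coeff k • (X ^ k : ℂ[X]) := by
      ext1 i
      simp only [smul_X_eq_monomial]
      exact as_sum_support (φ i)
    conv_lhs => rw [← wronskianAlt_apply, hφ]
    refine ((wronskianAlt m).toMultilinearMap.map_sum_finset _ _).trans ?_
    simp only [AlternatingMap.coe_multilinearMap, AlternatingMap.map_smul_univ, wronskianAlt_apply]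
  rw [hexpand, Finset.mul_sum, finsetSum_coeff, Finset.sum_filter]
  refine Finset.sum_congr rfl fun n _ => ?_
  rw [mul_smul_comm, X_pow_mul_wronskian_X_pow, smul_eq_C_mul, ← mul_assoc, ← C_mul,
    coeff_C_mul_X_pow]
  simp only [eq_comm]

section WronskianDegrees

variable {m : ℕ} {φ : Fin m → ℂ[X]}

theorem coeff_X_pow_mul_wronskian_ne_zero (t : Fin m → ℕ) (ht : ∀ i, (φ i).coeff (t i) ≠ 0)
    (hinj : Injective t)
    (hext : ∀ n ∈ Fintype.piFinset (fun i => (φ i).support), ∑ i, n i = ∑ i, t i → n = t) :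
    (X ^ (∑ i : Fin m, (i : ℕ)) * _root_.wronskian m φ).coeff (∑ i, t i) ≠ 0 := by
  classical
  have ht_mem : t ∈ Fintype.piFinset (fun i => (φ i).support) :=
    Fintype.mem_piFinset.mpr fun i => mem_support_iff.mpr (ht i)
  rw [coeff_X_pow_mul_wronskian, Finset.sum_eq_single_of_mem t (by simp [ht_mem])]
  · refine mul_ne_zero (Finset.prod_ne_zero_iff.mpr fun i _ => ht i) ?_
    exact Matrix.det_vandermonde_ne_zero_iff.mpr (Nat.cast_injective.comp hinj)
  · intro n hn hne
    simp only [Finset.mem_filter] at hn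
    exact absurd (hext n hn.1 hn.2) hne

theorem wronskian_ne_zero_and_natDegree_add (hφ : ∀ i, φ i ≠ 0)
    (hinj : Injective fun i => (φ i).natDegree) :
    _root_.wronskian m φ ≠ 0 ∧
      (_root_.wronskian m φ).natDegree + ∑ i : Fin m, (i : ℕ) = ∑ i, (φ i).natDegree := by
  classical
  have hle : ∀ n ∈ Fintype.piFinset (fun i => (φ i).support), ∀ i, n i ≤ (φ i).natDegree :=
    fun n hn i => le_natDegree_of_mem_supp _ (Fintype.mem_piFinset.mp hn i)
  have hlead := coeff_X_pow_mul_wronskian_ne_zero _ (fun i => leadingCoeff_ne_zero.mpr (hφ i))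
    hinj fun n hn hsum =>
      funext fun i => (Finset.sum_eq_sum_iff_of_le fun i _ => hle n hn i).mp hsum i (by simp)
  have hvanish : ∀ M, ∑ i, (φ i).natDegree < M →
      (X ^ (∑ i : Fin m, (i : ℕ)) * _root_.wronskian m φ).coeff M = 0 := by
    intro M hM
    rw [coeff_X_pow_mul_wronskian]
    refine Finset.sum_eq_zero fun n hn => absurd ?_ hM.not_ge
    simp only [Finset.mem_filter] at hn
    exact hn.2 ▸ Finset.sum_le_sum fun i _ => hle n hn.1 i
  have hW : _root_.wronskian m φ ≠ 0 := by
    rintro hW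
    simp [hW] at hlead
  refine ⟨hW, ?_⟩
  have := natDegree_eq_of_le_of_coeff_ne_zero (natDegree_le_iff_coeff_eq_zero.mpr hvanish) hlead
  rwa [natDegree_mul (pow_ne_zero _ X_ne_zero) hW, natDegree_X_pow, add_comm] at this

theorem wronskian_ne_zero_and_natTrailingDegree_add (hφ : ∀ i, φ i ≠ 0)
    (hinj : Injective fun i => (φ i).natTrailingDegree) :
    _root_.wronskian m φ ≠ 0 ∧ (_root_.wronskian m φ).natTrailingDegree + ∑ i : Fin m, (i : ℕ) =
      ∑ i, (φ i).natTrailingDegree := by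
  classical
  have hle : ∀ n ∈ Fintype.piFinset (fun i => (φ i).support), ∀ i,
      (φ i).natTrailingDegree ≤ n i :=
    fun n hn i => natTrailingDegree_le_of_mem_supp _ (Fintype.mem_piFinset.mp hn i)
  have htrail := coeff_X_pow_mul_wronskian_ne_zero _
    (fun i => trailingCoeff_nonzero_iff_nonzero.mpr (hφ i)) hinj fun n hn hsum =>
      funext fun i => ((Finset.sum_eq_sum_iff_of_le fun i _ => hle n hn i).mp hsum.symm i
        (by simp)).symm
  have hvanish : ∀ M < ∑ i, (φ i).natTrailingDegree,
      (X ^ (∑ i : Fin m, (i : ℕ)) * _root_.wronskian m φ).coeff M = 0 := by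
    intro M hM
    rw [coeff_X_pow_mul_wronskian]
    refine Finset.sum_eq_zero fun n hn => absurd ?_ hM.not_ge
    simp only [Finset.mem_filter] at hn
    exact hn.2 ▸ Finset.sum_le_sum fun i _ => hle n hn.1 i
  have hW : _root_.wronskian m φ ≠ 0 := by
    rintro hW
    simp [hW] at htrail
  refine ⟨hW, ?_⟩
  have := le_antisymm (natTrailingDegree_le_of_ne_zero htrail)
    (le_natTrailingDegree (mul_ne_zero (pow_ne_zero _ X_ne_zero) hW) hvanish)
  rwa [natTrailingDegree_mul (pow_ne_zero _ X_ne_zero) hW, natTrailingDegree_X_pow,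
    add_comm] at this

end WronskianDegrees

section Spans

variable {k : ℕ} {g : Fin k → ℂ[X]} {a : Fin k → ℂ}

theorem sum_smul_ne_zero_and_natDegree_eq (hg : ∀ j, g j ≠ 0)
    (hinj : Injective fun j => (g j).natDegree) (ha : a ≠ 0) :
    ∑ j, a j • g j ≠ 0 ∧ ∃ j, (∑ j, a j • g j).natDegree = (g j).natDegree := by
  classical
  obtain ⟨j₀, hj₀, hmax⟩ := Finset.exists_max_image {j | a j ≠ 0} (fun j => (g j).natDegree)
    (by simpa [Finset.filter_nonempty_iff, Function.ne_iff] using ha)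
  simp only [Finset.mem_filter, Finset.mem_univ, true_and] at hj₀ hmax
  have hcoeff : ∀ n, (∑ j, a j • g j).coeff n = ∑ j, a j * (g j).coeff n := fun n => by
    simp [finsetSum_coeff]
  have hlead : (∑ j, a j • g j).coeff (g j₀).natDegree ≠ 0 := by
    rw [hcoeff, Finset.sum_eq_single j₀]
    · exact mul_ne_zero hj₀ (leadingCoeff_ne_zero.mpr (hg j₀))
    · intro j _ hj
      by_cases haj : a j = 0
      · simp [haj]
      · rw [coeff_eq_zero_of_natDegree_lt ((hmax j haj).lt_of_ne (hinj.ne hj)), mul_zero]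
    · simp
  have hvanish : ∀ n, (g j₀).natDegree < n → (∑ j, a j • g j).coeff n = 0 := by
    intro n hn
    rw [hcoeff]
    refine Finset.sum_eq_zero fun j _ => ?_
    by_cases haj : a j = 0
    · simp [haj]
    · rw [coeff_eq_zero_of_natDegree_lt ((hmax j haj).trans_lt hn), mul_zero]
  refine ⟨fun h => hlead (by simp [h]), j₀, ?_⟩
  exact natDegree_eq_of_le_of_coeff_ne_zero (natDegree_le_iff_coeff_eq_zero.mpr hvanish) hlead

theorem sum_smul_ne_zero_and_natTrailingDegree_eq (hg : ∀ j, g j ≠ 0)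
    (hinj : Injective fun j => (g j).natTrailingDegree) (ha : a ≠ 0) :
    ∑ j, a j • g j ≠ 0 ∧
      ∃ j, (∑ j, a j • g j).natTrailingDegree = (g j).natTrailingDegree := by
  classical
  obtain ⟨j₀, hj₀, hmin⟩ := Finset.exists_min_image {j | a j ≠ 0}
    (fun j => (g j).natTrailingDegree)
    (by simpa [Finset.filter_nonempty_iff, Function.ne_iff] using ha)
  simp only [Finset.mem_filter, Finset.mem_univ, true_and] at hj₀ hmin
  have hcoeff : ∀ n, (∑ j, a j • g j).coeff n = ∑ j, a j * (g j).coeff n := fun n => by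
    simp [finsetSum_coeff]
  have htrail : (∑ j, a j • g j).coeff (g j₀).natTrailingDegree ≠ 0 := by
    rw [hcoeff, Finset.sum_eq_single j₀]
    · exact mul_ne_zero hj₀ (trailingCoeff_nonzero_iff_nonzero.mpr (hg j₀))
    · intro j _ hj
      by_cases haj : a j = 0
      · simp [haj]
      · rw [coeff_eq_zero_of_lt_natTrailingDegree
          ((hmin j haj).lt_of_ne (hinj.ne hj).symm), mul_zero]
    · simp
  have hvanish : ∀ n < (g j₀).natTrailingDegree, (∑ j, a j • g j).coeff n = 0 := by
    intro n hn
    rw [hcoeff]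
    refine Finset.sum_eq_zero fun j _ => ?_
    by_cases haj : a j = 0
    · simp [haj]
    · rw [coeff_eq_zero_of_lt_natTrailingDegree (hn.trans_le (hmin j haj)), mul_zero]
  have hne : ∑ j, a j • g j ≠ 0 := fun h => htrail (by simp [h])
  exact ⟨hne, j₀, le_antisymm (natTrailingDegree_le_of_ne_zero htrail)
    (le_natTrailingDegree hne hvanish)⟩

end Spans

theorem derivative_taylor (w : ℂ) (p : ℂ[X]) :
    derivative (taylor w p) = taylor w (derivative p) := by
  simp [taylor_apply, derivative_comp]

theorem iterate_derivative_taylor (w : ℂ) (p : ℂ[X]) (n : ℕ) :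
    derivative^[n] (taylor w p) = taylor w (derivative^[n] p) := by
  induction n with
  | zero => rfl
  | succ n ih => rw [iterate_succ_apply', iterate_succ_apply', ih, derivative_taylor]

theorem wronskian_taylor (w : ℂ) (m : ℕ) (φ : Fin m → ℂ[X]) :
    _root_.wronskian m (fun i => taylor w (φ i)) = taylor w (_root_.wronskian m φ) := by
  rw [_root_.wronskian, _root_.wronskian, ← taylorAlgHom_apply, AlgHom.map_det]
  congr 1
  refine Matrix.ext fun i j => ?_
  simp [iterate_derivative_taylor]

theorem Fin.add_rev_eq_of_forall_exists_add_eq {n K : ℕ} {a : Fin n → ℕ} (ha : StrictMono a)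
    (h : ∀ i, ∃ j, a i + a j = K) (i : Fin n) : a i + a i.rev = K := by
  choose σ hσ using h
  have hσ_anti : StrictAnti σ := fun i i' hii' => ha.lt_iff_lt.mp <| by
    have := ha hii'
    have := hσ i
    have := hσ i'
    omega
  have hσ_rev : σ ∘ Fin.rev = id :=
    (hσ_anti.comp fun _ _ h => Fin.rev_lt_rev.mpr h).eq_id
  have := hσ i.rev
  rw [show σ i.rev = i from congrFun hσ_rev i] at this
  omega

structure IsWronskianOrder (ν : ℂ[X] → ℕ) : Prop where
  map_mul {p q : ℂ[X]} : p ≠ 0 → q ≠ 0 → ν (p * q) = ν p + ν q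
  map_sum_smul {k : ℕ} {g : Fin k → ℂ[X]} {a : Fin k → ℂ} : (∀ j, g j ≠ 0) → Injective (ν ∘ g) →
    a ≠ 0 → ∑ j, a j • g j ≠ 0 ∧ ∃ j, ν (∑ j, a j • g j) = ν (g j)
  map_wronskian {k : ℕ} {φ : Fin k → ℂ[X]} : (∀ i, φ i ≠ 0) → Injective (ν ∘ φ) →
    _root_.wronskian k φ ≠ 0 ∧ ν (_root_.wronskian k φ) + ∑ i : Fin k, (i : ℕ) = ∑ i, ν (φ i)

theorem isWronskianOrder_natDegree : IsWronskianOrder natDegree :=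
  ⟨natDegree_mul, sum_smul_ne_zero_and_natDegree_eq, wronskian_ne_zero_and_natDegree_add⟩

theorem isWronskianOrder_natTrailingDegree : IsWronskianOrder natTrailingDegree :=
  ⟨natTrailingDegree_mul, sum_smul_ne_zero_and_natTrailingDegree_eq,
    wronskian_ne_zero_and_natTrailingDegree_add⟩

namespace IsWronskianOrder

variable {ν : ℂ[X] → ℕ} (hν : IsWronskianOrder ν)

include hν

theorem comp_taylor (w : ℂ) : IsWronskianOrder (ν ∘ taylor w) := by
  have hne : ∀ {p : ℂ[X]}, p ≠ 0 → taylor w p ≠ 0 := fun hp h => hp ((taylor_eq_zero w _).mp h)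
  refine ⟨fun hp hq => ?_, fun {k g a} hg hinj ha => ?_, fun {k φ} hφ hinj => ?_⟩
  · simpa [taylor_mul] using hν.map_mul (hne hp) (hne hq)
  · have hsum : ∑ j, a j • taylor w (g j) = taylor w (∑ j, a j • g j) := by
      simp only [map_sum, map_smul]
    have := hν.map_sum_smul (g := fun j => taylor w (g j)) (fun j => hne (hg j)) hinj ha
    rw [hsum] at this
    exact ⟨fun h => this.1 (by rw [h, map_zero]), this.2⟩
  · have := hν.map_wronskian (φ := fun i => taylor w (φ i)) (fun i => hne (hφ i)) hinj
    rw [wronskian_taylor] at this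
    exact ⟨fun h => this.1 (by rw [h, map_zero]), this.2⟩

theorem linearIndependent {k : ℕ} {g : Fin k → ℂ[X]} (hg : ∀ j, g j ≠ 0)
    (hinj : Injective (ν ∘ g)) : LinearIndependent ℂ g := by
  rw [Fintype.linearIndependent_iff]
  intro a hsum
  by_contra! ha
  exact (hν.map_sum_smul hg hinj fun h => ha.elim fun j hj => hj (congrFun h j)).1 hsum

theorem exists_eq_of_mem_span {k : ℕ} {g : Fin k → ℂ[X]} (hg : ∀ j, g j ≠ 0)
    (hinj : Injective (ν ∘ g)) {p : ℂ[X]} (hp : p ∈ span ℂ (Set.range g)) (hp0 : p ≠ 0) :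
    ∃ j, ν p = ν (g j) := by
  obtain ⟨a, rfl⟩ := (mem_span_range_iff_exists_fun ℂ).mp hp
  exact (hν.map_sum_smul hg hinj fun ha => hp0 (by simp [ha])).2

theorem exists_add_eq_of_isSelfDual {m : ℕ} {X : Submodule ℂ ℂ[X]} {f : Fin (m + 1) → ℂ[X]}
    (hf : ∀ j, f j ≠ 0) (hinj : Injective (ν ∘ f)) (hX : span ℂ (Set.range f) = X)
    (hsd : IsSelfDual (m + 1) X) : ∃ K, ∀ i, ∃ j, ν (f i) + ν (f j) = K := by
  obtain ⟨ψ, hψ⟩ := hsd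
  set g := fun j : Fin (m + 1) => _root_.wronskian m (f ∘ j.succAbove)
  have hfX : ∀ j, f j ∈ X := fun j => hX ▸ subset_span ⟨j, rfl⟩
  have hg : ∀ j, g j ≠ 0 ∧ ν (g j) + ∑ i : Fin m, (i : ℕ) + ν (f j) = ∑ i, ν (f i) := by
    intro j
    obtain ⟨hg0, hgν⟩ := hν.map_wronskian (φ := f ∘ j.succAbove) (fun i => hf _)
      (hinj.comp (Fin.succAbove_right_injective))
    refine ⟨hg0, ?_⟩
    rw [Fin.sum_univ_succAbove (fun i => ν (f i)) j, hgν]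
    simp only [comp_apply]
    ring
  have hginj : Injective (ν ∘ g) := fun j j' h => hinj <| by
    have := (hg j).2
    have := (hg j').2
    simp only [comp_apply] at h ⊢
    omega
  have hψ0 : ψ ≠ 0 := by
    rintro rfl
    obtain ⟨x, -, hx⟩ : g 0 ∈ (fun q => 0 * q) '' (X : Set ℂ[X]) :=
      hψ ▸ ⟨f ∘ (0 : Fin (m + 1)).succAbove, fun i => hfX _, rfl⟩
    exact (hg 0).1 (by simpa using hx.symm)
  refine ⟨∑ i, ν (f i) - ∑ i : Fin m, (i : ℕ) - ν ψ, fun i => ?_⟩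
  obtain ⟨φ, hφX, hφ⟩ : ψ * f i ∈ dualSet (m + 1) X := hψ ▸ ⟨f i, hfX i, rfl⟩
  have hmem : ψ * f i ∈ span ℂ (Set.range g) :=
    hφ ▸ wronskian_mem_span_wronskian_succAbove f fun i' => hX.symm ▸ hφX i'
  obtain ⟨j, hj⟩ := hν.exists_eq_of_mem_span (fun j => (hg j).1) hginj hmem
    (mul_ne_zero hψ0 (hf i))
  rw [hν.map_mul hψ0 (hf i)] at hj
  have := (hg j).2
  exact ⟨j, by omega⟩

theorem exists_add_rev_eq_of_isSelfDual {m : ℕ} {X : Submodule ℂ ℂ[X]} [FiniteDimensional ℂ X]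
    (hXN : finrank ℂ X = m + 1) {f : Fin (m + 1) → ℂ[X]} (hfX : ∀ j, f j ∈ X)
    (hf : ∀ j, f j ≠ 0) (hmono : StrictMono (ν ∘ f)) (hsd : IsSelfDual (m + 1) X) :
    ∃ K, ∀ j, ν (f j) + ν (f j.rev) = K := by
  have hspan : span ℂ (Set.range f) = X := by
    refine eq_of_le_of_finrank_eq (span_le.mpr (Set.range_subset_iff.mpr hfX)) ?_
    rw [finrank_span_eq_card (hν.linearIndependent hf hmono.injective), hXN, Fintype.card_fin]
  obtain ⟨K, hK⟩ := hν.exists_add_eq_of_isSelfDual hf hmono.injective hspan hsd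
  exact ⟨K, Fin.add_rev_eq_of_forall_exists_add_eq hmono hK⟩

end IsWronskianOrder

theorem isWronskianOrder_rootMultiplicity (w : ℂ) : IsWronskianOrder (rootMultiplicity w) := by
  have : rootMultiplicity w = natTrailingDegree ∘ taylor w := by
    ext p
    rw [Function.comp_apply, taylor_apply, rootMultiplicity_eq_natTrailingDegree]
  exact this ▸ isWronskianOrder_natTrailingDegree.comp_taylor w

theorem InSchubertCell.exists_mem_notMem {N d : ℕ} {ξ : ℕ → ℕ} {F : ℕ → Submodule ℂ ℂ[X]}
    {X : Submodule ℂ ℂ[X]} [FiniteDimensional ℂ X] (h : InSchubertCell N d ξ F X) {j : ℕ}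
    (hj : j < N) : ∃ f ∈ X, f ∈ F (d - j - ξ (N - j)) ∧ f ∉ F (d - j - ξ (N - j) - 1) := by
  obtain ⟨hrank, hrank'⟩ := h j hj
  have hnle : ¬ X ⊓ F (d - j - ξ (N - j)) ≤ X ⊓ F (d - j - ξ (N - j) - 1) := fun hle => by
    have := Submodule.finrank_mono hle
    omega
  obtain ⟨f, hf, hf'⟩ := SetLike.not_le_iff_exists.mp hnle
  exact ⟨f, (mem_inf.mp hf).1, (mem_inf.mp hf).2, fun h => hf' (mem_inf.mpr ⟨(mem_inf.mp hf).1, h⟩)⟩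

theorem natDegree_add_one_eq_of_mem_degreeLT_of_notMem {R : Type*} [Semiring R] {p : R[X]}
    {a : ℕ} (h : p ∈ degreeLT R a) (h' : p ∉ degreeLT R (a - 1)) :
    p ≠ 0 ∧ p.natDegree + 1 = a := by
  have hp : p ≠ 0 := by
    rintro rfl
    exact h' (zero_mem _)
  rw [mem_degreeLT, degree_eq_natDegree hp, Nat.cast_lt] at h h'
  exact ⟨hp, by omega⟩

theorem mem_oscFlag {d k : ℕ} {w : ℂ} {p : ℂ[X]} :
    p ∈ oscFlag d w k ↔ p ∈ degreeLT ℂ d ∧ (X - C w) ^ (d - k) ∣ p := by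
  rw [oscFlag, mem_inf, restrictScalars_mem, Ideal.mem_span_singleton]

theorem rootMultiplicity_add_eq_of_mem_oscFlag_of_notMem {d a : ℕ} {w : ℂ} {p : ℂ[X]}
    (h : p ∈ oscFlag d w a) (h' : p ∉ oscFlag d w (a - 1)) :
    p ≠ 0 ∧ 0 < a ∧ rootMultiplicity w p + a = d := by
  have hp : p ≠ 0 := by
    rintro rfl
    exact h' (zero_mem _)
  rw [mem_oscFlag, ← le_rootMultiplicity_iff hp] at h h'
  obtain ⟨hdeg, hle⟩ := h
  have hlt : ¬ d - (a - 1) ≤ rootMultiplicity w p := fun h₂ => h' ⟨hdeg, h₂⟩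
  exact ⟨hp, by omega, by omega⟩

/-- The exponents of a point of `Ω_ξ(F(z))` at `z`: the orders of vanishing at `z` of a basis
adapted to the flag. -/
def exponent (N : ℕ) (ξ : ℕ → ℕ) (j : Fin N) : ℕ := j + ξ (N - j)

theorem strictMono_exponent {m : ℕ} {ξ : ℕ → ℕ}
    (hanti : ∀ i, 1 ≤ i → i < m + 1 → ξ (i + 1) ≤ ξ i) : StrictMono (exponent (m + 1) ξ) :=
  Fin.strictMono_iff_lt_succ.mpr fun j => by
    have := hanti (m - j) (by omega) (by omega)
    simp only [exponent, Fin.val_castSucc, Fin.val_succ]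
    rw [show m + 1 - (j + 1) = m - j by omega, show m + 1 - j = m - j + 1 by omega]
    omega

theorem InSchubertCell.exists_exponent_add_rev_eq {m d : ℕ} {w : OnePoint ℂ} {ξ : ℕ → ℕ}
    {X : Submodule ℂ ℂ[X]} [FiniteDimensional ℂ X]
    (hcell : InSchubertCell (m + 1) d ξ (oscFlagP d w) X)
    (hanti : ∀ i, 1 ≤ i → i < m + 1 → ξ (i + 1) ≤ ξ i) (hXN : finrank ℂ X = m + 1)
    (hsd : IsSelfDual (m + 1) X) :
    ∃ K, ∀ j, exponent (m + 1) ξ j + exponent (m + 1) ξ j.rev = K := by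
  choose f hfX hf hf' using fun j : Fin (m + 1) => hcell.exists_mem_notMem j.isLt
  have he := strictMono_exponent hanti
  cases w with
  | infty =>
    have hdeg := fun j => natDegree_add_one_eq_of_mem_degreeLT_of_notMem (hf j) (hf' j)
    have hdeg_add : ∀ j, (f j).natDegree + 1 + exponent (m + 1) ξ j = d := fun j => by
      have := (hdeg j).2
      have := he.monotone (Fin.le_last j)
      simp only [exponent, Fin.val_last] at *
      omega
    have hmono : StrictMono (natDegree ∘ f ∘ Fin.rev) := fun j j' hjj' => by
      have := he (Fin.rev_lt_rev.mpr hjj')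
      have := hdeg_add j.rev
      have := hdeg_add j'.rev
      simp only [comp_apply]
      omega
    obtain ⟨K, hK⟩ := isWronskianOrder_natDegree.exists_add_rev_eq_of_isSelfDual hXN
      (fun j => hfX _) (fun j => (hdeg _).1) hmono hsd
    refine ⟨2 * d - 2 - K, fun j => ?_⟩
    have := hK j.rev
    have := hdeg_add j
    have := hdeg_add j.rev
    simp only [Fin.rev_rev] at *
    omega
  | coe z =>
    have hmult := fun j => rootMultiplicity_add_eq_of_mem_oscFlag_of_notMem (hf j) (hf' j)
    have hν : rootMultiplicity z ∘ f = exponent (m + 1) ξ := funext fun j => by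
      have := (hmult j).2.1
      have := (hmult j).2.2
      simp only [exponent, comp_apply]
      omega
    obtain ⟨K, hK⟩ := (isWronskianOrder_rootMultiplicity z).exists_add_rev_eq_of_isSelfDual hXN
      hfX (fun j => (hmult j).1) (hν ▸ he) hsd
    exact ⟨K, fun j => by simpa [← hν] using hK j⟩

theorem sub_eq_sub_of_exponent_add_rev_eq {m K : ℕ} {ξ : ℕ → ℕ}
    (h : ∀ j, exponent (m + 1) ξ j + exponent (m + 1) ξ j.rev = K) {i : ℕ} (h₁ : 1 ≤ i)
    (h₂ : i ≤ m) : (ξ i : ℤ) - ξ (i + 1) = (ξ (m + 1 - i) : ℤ) - ξ (m + 1 - i + 1) := by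
  have hsym : ∀ j ≤ m, ξ (m + 1 - j) + ξ (j + 1) + m = K := fun j hj => by
    have := h ⟨j, by omega⟩
    simp only [exponent, Fin.val_rev] at this
    rw [show m + 1 - (m + 1 - (j + 1)) = j + 1 by omega] at this
    omega
  have e₁ := hsym (i - 1) (by omega)
  have e₂ := hsym i h₂
  rw [Nat.sub_add_cancel h₁, show m + 1 - (i - 1) = m + 1 - i + 1 by omega] at e₁
  omega

theorem stmt12_general (N d n : ℕ)
    (z : Fin n → OnePoint ℂ)
    (ξ : Fin n → ℕ → ℕ)
    (hanti : ∀ s, ∀ i, 1 ≤ i → i < N → ξ s (i + 1) ≤ ξ s i)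
    (X : Submodule ℂ (Polynomial ℂ))
    (hXN : finrank ℂ X = N)
    (hcell : ∀ s, InSchubertCell N d (ξ s) (oscFlagP d (z s)) X)
    (hsd : IsSelfDual N X) :
    ∀ s, ∀ i, 1 ≤ i → i ≤ N - 1 →
      (ξ s i : ℤ) - ξ s (i + 1) = (ξ s (N - i) : ℤ) - ξ s (N - i + 1) := by
  intro s i h₁ h₂
  obtain ⟨m, rfl⟩ : ∃ m, N = m + 1 := ⟨N - 1, by omega⟩
  have : FiniteDimensional ℂ X := Module.finite_of_finrank_pos (by omega)
  obtain ⟨K, hK⟩ := (hcell s).exists_exponent_add_rev_eq (hanti s) hXN hsd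
  exact sub_eq_sub_of_exponent_add_rev_eq hK h₁ h₂

/-- If the intersection of osculating Schubert cells (with `|ξ| = N(d-N)`) contains a
self-dual space `X`, then every partition `ξ^(s)` satisfies the symmetry
`ξ_i − ξ_{i+1} = ξ_{N−i} − ξ_{N−i+1}` for `i = 1, …, N−1`. -/
theorem stmt12 (N d n : ℕ) (hNd : N ≤ d)
    (z : Fin n → OnePoint ℂ) (hz : Function.Injective z)
    (ξ : Fin n → ℕ → ℕ)
    (hanti : ∀ s, ∀ i, 1 ≤ i → i < N → ξ s (i + 1) ≤ ξ s i)
    (hξ1 : ∀ s, ξ s 1 ≤ d - N)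
    (hsum : ∑ s, ∑ i ∈ Finset.Icc 1 N, ξ s i = N * (d - N))
    (X : Submodule ℂ (Polynomial ℂ)) (hXd : X ≤ Polynomial.degreeLT ℂ d)
    (hXN : finrank ℂ X = N)
    (hcell : ∀ s, InSchubertCell N d (ξ s) (oscFlagP d (z s)) X)
    (hsd : IsSelfDual N X) :
    ∀ s, ∀ i, 1 ≤ i → i ≤ N - 1 →
      (ξ s i : ℤ) - ξ s (i + 1) = (ξ s (N - i) : ℤ) - ξ s (N - i + 1) :=
  stmt12_general N d n z ξ hanti X hXN hcell hsd
end

section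
/- Let N ≤ d, let z_1, …, z_n ∈ ℂ be distinct, let ξ^{(1)}, …, ξ^{(n)} be partitions with at most N parts, each with ξ^{(s)}_1 ≤ d−N, and let k_1, …, k_n ∈ ℕ. Set p = ∏_{s=1}^n (x − z_s)^{k_s}, K = k_1 + ⋯ + k_n, and for each s let ξ^{(s)} + k_s denote the partition (ξ^{(s)}_1 + k_s, …, ξ^{(s)}_N + k_s). Then the map X ↦ p·X is a bijection from ⋂_{s=1}^n Ω_{ξ^{(s)}}(F(z_s)) ⊆ Gr(N,d) onto ⋂_{s=1}^n Ω_{ξ^{(s)}+k_s}(F(z_s)) ⊆ Gr(N,d+K), where in the target the osculating flags F(z_s) are taken inside ℂ_{d+K}[x]. -/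
open Module Polynomial

/-! Write `p = ∏ (x - z_s)^{k_s}` and `K = deg p`. Multiplication by `p` is injective and sends
`ℂ_d[x]` into `ℂ_{d+K}[x]`. Since the factors of `p` other than `(x - z_s)^{k_s}` are coprime to
`x - z_s`, we have `(x - z_s)^{e + k_s} ∣ p f ↔ (x - z_s)^e ∣ f`; hence `p · (X ∩ F(z_s)_{d-e}) =
p·X ∩ F(z_s)_{d+K-e-k_s}`, and every dimension appearing in the Schubert conditions of `X` for `ξ`
reappears in those of `p·X` for `ξ + k_s`. Conversely, the condition `j = 0` of a target cell makes
every element of the target space vanish to order `≥ k_s` at each `z_s`, so the space is `p·X`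
with `X` its preimage. -/

namespace Polynomial

variable {R ι : Type*} [CommRing R] [IsDomain R] [Fintype ι]

theorem mul_mem_degreeLT_add_natDegree_iff {p f : R[X]}
    (hp : p ≠ 0) {d : ℕ} : p * f ∈ degreeLT R (d + p.natDegree) ↔ f ∈ degreeLT R d := by
  rcases eq_or_ne f 0 with rfl | hf
  · simp only [mul_zero, Submodule.zero_mem]
  · rw [mem_degreeLT, mem_degreeLT, degree_mul, degree_eq_natDegree hf, degree_eq_natDegree hp,
      ← Nat.cast_add, Nat.cast_lt, Nat.cast_lt]
    omega

/-- `D - (D - e)` is `min D e`; when `e ≥ D` both sides force `f = 0`. -/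
theorem X_sub_C_pow_sub_sub_dvd_iff {z : R} {f : R[X]}
    {D : ℕ} (hf : f.degree < D) (e : ℕ) :
    (X - C z) ^ (D - (D - e)) ∣ f ↔ (X - C z) ^ e ∣ f := by
  rcases le_total e D with h | h
  · rw [Nat.sub_sub_self h]
  · rw [Nat.sub_eq_zero_of_le h, Nat.sub_zero]
    refine ⟨fun hdvd => ?_, (pow_dvd_pow _ h).trans⟩
    rw [eq_zero_of_dvd_of_degree_lt hdvd (by rwa [degree_pow, degree_X_sub_C, nsmul_one])]
    exact dvd_zero _

theorem prod_X_sub_C_pow_ne_zero (z : ι → R) (k : ι → ℕ) : ∏ s, (X - C (z s)) ^ k s ≠ 0 :=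
  Finset.prod_ne_zero_iff.mpr fun s _ => pow_ne_zero _ (X_sub_C_ne_zero (z s))

theorem prod_X_sub_C_pow_mul_mem_degreeLT_iff (z : ι → R) (k : ι → ℕ) {d : ℕ} {f : R[X]} :
    (∏ s, (X - C (z s)) ^ k s) * f ∈ degreeLT R (d + ∑ s, k s) ↔ f ∈ degreeLT R d := by
  have hdeg : (∏ s, (X - C (z s)) ^ k s).natDegree = ∑ s, k s := by
    simp [natDegree_prod _ _ fun s _ => pow_ne_zero _ (X_sub_C_ne_zero (z s))]
  rw [← hdeg]
  exact mul_mem_degreeLT_add_natDegree_iff (prod_X_sub_C_pow_ne_zero z k)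

theorem finrank_map_mulLeft {K : Type*} [Field K] {p : K[X]} (hp : p ≠ 0)
    (V : Submodule K K[X]) : finrank K (V.map (LinearMap.mulLeft K p)) = finrank K V :=
  (Submodule.equivMapOfInjective _ (mul_right_injective₀ hp) V).finrank_eq.symm

theorem X_sub_C_pow_add_dvd_prod_mul_iff {K : Type*} [Field K] {z : ι → K}
    (hz : Function.Injective z) (k : ι → ℕ) (s : ι) (e : ℕ) (f : K[X]) :
    (X - C (z s)) ^ (e + k s) ∣ (∏ t, (X - C (z t)) ^ k t) * f ↔ (X - C (z s)) ^ e ∣ f := by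
  classical
  have hcop : IsCoprime ((X - C (z s)) ^ e) (∏ t ∈ Finset.univ.erase s, (X - C (z t)) ^ k t) :=
    IsCoprime.prod_right fun t ht =>
      (pairwise_coprime_X_sub_C hz (Finset.ne_of_mem_erase ht).symm).pow
  rw [← Finset.mul_prod_erase _ _ (Finset.mem_univ s), mul_assoc, add_comm, pow_add,
    mul_dvd_mul_iff_left (pow_ne_zero _ (X_sub_C_ne_zero _))]
  exact ⟨hcop.dvd_of_dvd_mul_left, fun h => h.mul_left _⟩

end Polynomial

theorem mem_oscFlag_sub_iff {D e : ℕ} {z : ℂ} {g : ℂ[X]} :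
    g ∈ oscFlag D z (D - e) ↔ g.degree < D ∧ (X - C z) ^ e ∣ g := by
  simp only [oscFlag, Submodule.mem_inf, mem_degreeLT, Submodule.restrictScalars_mem,
    Ideal.mem_span_singleton]
  exact and_congr_right fun hg => X_sub_C_pow_sub_sub_dvd_iff hg e

section SchubertCell

variable {N D : ℕ} {ξ : ℕ → ℕ} {F : ℕ → Submodule ℂ ℂ[X]} {V : Submodule ℂ ℂ[X]}

theorem inSchubertCell_iff : InSchubertCell N D ξ F V ↔ ∀ j < N,
    finrank ℂ ↥(V ⊓ F (D - (j + ξ (N - j)))) = N - j ∧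
      finrank ℂ ↥(V ⊓ F (D - (j + ξ (N - j) + 1))) = N - j - 1 :=
  forall₂_congr fun j _ => by rw [Nat.sub_sub, Nat.sub_sub]

theorem InSchubertCell.le_of_finrank_eq [FiniteDimensional ℂ V] (h : InSchubertCell N D ξ F V)
    (hV : finrank ℂ V = N) : V ≤ F (D - ξ N) := by
  rcases N.eq_zero_or_pos with rfl | hN
  · rw [Submodule.finrank_eq_zero.mp hV]
    exact bot_le
  · have h0 := (h 0 hN).1
    simp only [Nat.sub_zero] at h0
    exact inf_eq_left.mp (Submodule.eq_of_le_of_finrank_eq inf_le_left (h0.trans hV.symm))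

end SchubertCell

section MulByProd

variable {ι : Type*} [Fintype ι] {z : ι → ℂ} (hz : Function.Injective z) (k : ι → ℕ) {d : ℕ}
  {V : Submodule ℂ ℂ[X]}
include hz

theorem map_mulLeft_inf_oscFlag (hV : V ≤ degreeLT ℂ d) (s : ι) (e : ℕ) :
    (V ⊓ oscFlag d (z s) (d - e)).map (LinearMap.mulLeft ℂ (∏ t, (X - C (z t)) ^ k t)) =
      V.map (LinearMap.mulLeft ℂ (∏ t, (X - C (z t)) ^ k t)) ⊓
        oscFlag (d + ∑ t, k t) (z s) (d + ∑ t, k t - (e + k s)) := by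
  ext g
  simp only [Submodule.mem_map, Submodule.mem_inf, mem_oscFlag_sub_iff, LinearMap.mulLeft_apply]
  constructor
  · rintro ⟨f, ⟨hfV, -, hdvd⟩, rfl⟩
    exact ⟨⟨f, hfV, rfl⟩,
      mem_degreeLT.mp ((prod_X_sub_C_pow_mul_mem_degreeLT_iff z k).mpr (hV hfV)),
      (X_sub_C_pow_add_dvd_prod_mul_iff hz k s e f).mpr hdvd⟩
  · rintro ⟨⟨f, hfV, rfl⟩, -, hdvd⟩
    exact ⟨f, ⟨hfV, mem_degreeLT.mp (hV hfV),
      (X_sub_C_pow_add_dvd_prod_mul_iff hz k s e f).mp hdvd⟩, rfl⟩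

theorem inSchubertCell_map_mulLeft_iff (hV : V ≤ degreeLT ℂ d) (N : ℕ) (ξ : ℕ → ℕ) (s : ι) :
    InSchubertCell N (d + ∑ t, k t) (fun i => ξ i + k s) (oscFlag (d + ∑ t, k t) (z s))
        (V.map (LinearMap.mulLeft ℂ (∏ t, (X - C (z t)) ^ k t))) ↔
      InSchubertCell N d ξ (oscFlag d (z s)) V := by
  have hfinrank (e : ℕ) :
      finrank ℂ ↥(V.map (LinearMap.mulLeft ℂ (∏ t, (X - C (z t)) ^ k t)) ⊓
        oscFlag (d + ∑ t, k t) (z s) (d + ∑ t, k t - (e + k s))) =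
      finrank ℂ ↥(V ⊓ oscFlag d (z s) (d - e)) := by
    rw [← map_mulLeft_inf_oscFlag hz k hV s e]
    exact finrank_map_mulLeft (prod_X_sub_C_pow_ne_zero z k) _
  simp only [inSchubertCell_iff]
  exact forall₂_congr fun j _ => by
    rw [← add_assoc, add_right_comm _ (k s) 1, hfinrank, hfinrank]

theorem le_range_mulLeft_prod_of_inSchubertCell {N D : ℕ} {ξ : ι → ℕ → ℕ}
    {W : Submodule ℂ ℂ[X]} [FiniteDimensional ℂ W] (hW : finrank ℂ W = N)
    (hcell : ∀ s, InSchubertCell N D (fun i => ξ s i + k s) (oscFlag D (z s)) W) :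
    W ≤ LinearMap.range (LinearMap.mulLeft ℂ (∏ t, (X - C (z t)) ^ k t)) := by
  intro g hg
  obtain ⟨c, rfl⟩ : (∏ t, (X - C (z t)) ^ k t) ∣ g :=
    Fintype.prod_dvd_of_coprime (fun s t hst => (pairwise_coprime_X_sub_C hz hst).pow) fun s =>
      (pow_dvd_pow _ le_add_self).trans
        (mem_oscFlag_sub_iff.mp ((hcell s).le_of_finrank_eq hW hg)).2
  exact ⟨c, rfl⟩

end MulByProd

theorem stmt14_general (N d n : ℕ)
    (z : Fin n → ℂ) (hz : Function.Injective z)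
    (ξ : Fin n → ℕ → ℕ)
    (k : Fin n → ℕ) :
    Set.BijOn
      (fun X : Submodule ℂ (Polynomial ℂ) =>
        Submodule.map
          (LinearMap.mulLeft ℂ (∏ s, (Polynomial.X - Polynomial.C (z s)) ^ k s)) X)
      {X | X ≤ Polynomial.degreeLT ℂ d ∧ finrank ℂ X = N ∧
        ∀ s, InSchubertCell N d (ξ s) (oscFlag d (z s)) X}
      {X | X ≤ Polynomial.degreeLT ℂ (d + ∑ s, k s) ∧ finrank ℂ X = N ∧
        ∀ s, InSchubertCell N (d + ∑ s, k s) (fun i => ξ s i + k s)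
          (oscFlag (d + ∑ s, k s) (z s)) X} := by
  set μ := LinearMap.mulLeft ℂ (∏ s, (X - C (z s)) ^ k s)
  have hp := prod_X_sub_C_pow_ne_zero z k
  refine ⟨?_, (Submodule.map_injective_of_injective (mul_right_injective₀ hp)).injOn, ?_⟩
  · rintro V ⟨hVd, hVN, hVcell⟩
    refine ⟨?_, (finrank_map_mulLeft hp V).trans hVN,
      fun s => (inSchubertCell_map_mulLeft_iff hz k hVd N (ξ s) s).mpr (hVcell s)⟩
    rintro _ ⟨f, hf, rfl⟩
    exact (prod_X_sub_C_pow_mul_mem_degreeLT_iff z k).mpr (hVd hf)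
  · rintro W ⟨hWd, hWN, hWcell⟩
    have : FiniteDimensional ℂ W := Submodule.finiteDimensional_of_le hWd
    have hmap : (W.comap μ).map μ = W :=
      Submodule.map_comap_eq_self (le_range_mulLeft_prod_of_inSchubertCell hz k hWN hWcell)
    have hVd : W.comap μ ≤ degreeLT ℂ d := fun f hf =>
      (prod_X_sub_C_pow_mul_mem_degreeLT_iff z k).mp (hWd hf)
    refine ⟨W.comap μ, ⟨hVd, by rw [← finrank_map_mulLeft hp, hmap, hWN], fun s => ?_⟩, hmap⟩
    rw [← inSchubertCell_map_mulLeft_iff hz k hVd N (ξ s) s, hmap]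
    exact hWcell s

/-- Multiplication by `p = ∏ (x - z_s)^(k_s)` is a bijection from the intersection of the
Schubert cells `Ω_{ξ^(s)}(F(z_s)) ⊆ Gr(N,d)` onto the intersection of the Schubert cells
`Ω_{ξ^(s)+k_s}(F(z_s)) ⊆ Gr(N,d+K)`, where `K = k_1 + ⋯ + k_n`. -/
theorem stmt14 (N d n : ℕ) (hNd : N ≤ d)
    (z : Fin n → ℂ) (hz : Function.Injective z)
    (ξ : Fin n → ℕ → ℕ)
    (hanti : ∀ s, ∀ i, 1 ≤ i → i < N → ξ s (i + 1) ≤ ξ s i)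
    (hξ1 : ∀ s, ξ s 1 ≤ d - N)
    (k : Fin n → ℕ) :
    Set.BijOn
      (fun X : Submodule ℂ (Polynomial ℂ) =>
        Submodule.map
          (LinearMap.mulLeft ℂ (∏ s, (Polynomial.X - Polynomial.C (z s)) ^ k s)) X)
      {X | X ≤ Polynomial.degreeLT ℂ d ∧ finrank ℂ X = N ∧
        ∀ s, InSchubertCell N d (ξ s) (oscFlag d (z s)) X}
      {X | X ≤ Polynomial.degreeLT ℂ (d + ∑ s, k s) ∧ finrank ℂ X = N ∧
        ∀ s, InSchubertCell N (d + ∑ s, k s) (fun i => ξ s i + k s)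
          (oscFlag (d + ∑ s, k s) (z s)) X} :=
  stmt14_general N d n z hz ξ k
end
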